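/- arXiv:0811.3709 — 2 statements merged into one kernel-verified Lean document; each statement's English description precedes it below -/
import Mathlib

section
/- Let n ≥ 1, q₀, v ∈ ℝⁿ, λ > 0, q(t) = q₀ + t·v, and let ξ̂ : ℝ → ℝⁿ be differentiable with ξ̂'(t) = −(ξ̂(t) − q(t))/λ for t ≥ 0. Then ‖ξ̂(t) − q(t)‖ converges to λ‖v‖ as t → ∞; more precisely, for all t ≥ 0, | ‖ξ̂(t) − q(t)‖ − λ‖v‖ | ≤ exp(−t/λ)·‖ξ̂(0) − q(0) + λv‖. Hence ξ̂ asymptotically moves behind q at the fixed distance λ‖v‖. -/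
/-!
The error `e t = ξ̂ t - (q t - λ v)` of the observer relative to the point trailing `q` by `λ v`
solves the linear equation `e' = -λ⁻¹ e`: the shift by `λ v` exactly absorbs the drift `q' = v`.
Hence `e t = exp (-t/λ) e 0`, and the reverse triangle inequality turns this into the bound on
`‖ξ̂ t - q t‖ - λ‖v‖`, which tends to `0`.
-/

open Real Filter Topology

section

variable {E : Type*} [NormedAddCommGroup E] [NormedSpace ℝ E]

theorem eq_exp_mul_smul_of_hasDerivAt_smul {f : ℝ → E} {c : ℝ}
    (hf : ∀ t, 0 ≤ t → HasDerivAt f (c • f t) t) {t : ℝ} (ht : 0 ≤ t) :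
    f t = exp (c * t) • f 0 := by
  set g : ℝ → E := fun s => exp (-c * s) • f s
  have hg : ∀ s, 0 ≤ s → HasDerivAt g 0 s := by
    intro s hs
    have hexp : HasDerivAt (fun s => exp (-c * s)) (exp (-c * s) * -c) s := by
      simpa using ((hasDerivAt_id s).const_mul (-c)).exp
    refine (hexp.smul (hf s hs)).congr_deriv ?_
    rw [smul_smul, ← add_smul, show exp (-c * s) * c + exp (-c * s) * -c = 0 by ring, zero_smul]
  have hcont : ContinuousOn g (Set.Icc 0 t) := fun s hs =>
    (hg s hs.1).continuousAt.continuousWithinAt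
  have hconst : g t = g 0 := constant_of_has_deriv_right_zero hcont
    (fun s hs => (hg s hs.1).hasDerivWithinAt) t ⟨ht, le_rfl⟩
  simp only [g, mul_zero, exp_zero, one_smul] at hconst
  rw [← hconst, smul_smul, ← exp_add, show c * t + -c * t = 0 by ring, exp_zero, one_smul]

theorem HasDerivAt.reducedObserver_error {ξ q : ℝ → E} {v : E} {lam t : ℝ} (hlam : lam ≠ 0)
    (hq : HasDerivAt q v t) (hξ : HasDerivAt ξ (-lam⁻¹ • (ξ t - q t)) t) :
    HasDerivAt (fun s => ξ s - q s + lam • v) (-lam⁻¹ • (ξ t - q t + lam • v)) t := by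
  refine ((hξ.sub hq).add_const (lam • v)).congr_deriv ?_
  rw [smul_add, smul_smul, neg_mul, inv_mul_cancel₀ hlam, neg_one_smul, sub_eq_add_neg]

end

theorem reduced_observer_euclidean_distance_convergence_general
    (n : ℕ) (q₀ v : EuclideanSpace ℝ (Fin n)) (lam : ℝ) (hlam : 0 < lam)
    (q : ℝ → EuclideanSpace ℝ (Fin n))
    (hq : ∀ t, q t = q₀ + t • v)
    (ξhat : ℝ → EuclideanSpace ℝ (Fin n))
    (hdiff : Differentiable ℝ ξhat)
    (hobs : ∀ t, 0 ≤ t → deriv ξhat t = -(lam⁻¹) • (ξhat t - q t)) :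
    (∀ t, 0 ≤ t →
        |‖ξhat t - q t‖ - lam * ‖v‖| ≤ Real.exp (-t / lam) * ‖ξhat 0 - q 0 + lam • v‖) ∧
    Filter.Tendsto (fun t => ‖ξhat t - q t‖) Filter.atTop (nhds (lam * ‖v‖)) := by
  have hq' : ∀ t, HasDerivAt q v t := fun t => by
    rw [show q = _ from funext hq]
    simpa using ((hasDerivAt_id t).smul_const v).const_add q₀
  have herror : ∀ t, 0 ≤ t → HasDerivAt (fun s => ξhat s - q s + lam • v)
      (-lam⁻¹ • (ξhat t - q t + lam • v)) t := fun t ht =>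
    (hq' t).reducedObserver_error hlam.ne' (hobs t ht ▸ (hdiff t).hasDerivAt)
  have hbound : ∀ t, 0 ≤ t →
      |‖ξhat t - q t‖ - lam * ‖v‖| ≤ exp (-t / lam) * ‖ξhat 0 - q 0 + lam • v‖ := by
    intro t ht
    calc |‖ξhat t - q t‖ - lam * ‖v‖| = |‖ξhat t - q t‖ - ‖-(lam • v)‖| := by
          rw [norm_neg, norm_smul, norm_of_nonneg hlam.le]
      _ ≤ ‖ξhat t - q t + lam • v‖ := by simpa using abs_norm_sub_norm_le _ (-(lam • v))
      _ = exp (-t / lam) * ‖ξhat 0 - q 0 + lam • v‖ := by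
          rw [eq_exp_mul_smul_of_hasDerivAt_smul herror ht, norm_smul,
            norm_of_nonneg (exp_pos _).le, neg_mul, inv_mul_eq_div, neg_div]
  refine ⟨hbound, tendsto_iff_dist_tendsto_zero.2 <|
    squeeze_zero' (g := fun t => exp (-t / lam) * ‖ξhat 0 - q 0 + lam • v‖)
      (.of_forall fun _ => dist_nonneg) ?_ ?_⟩
  · exact (eventually_ge_atTop 0).mono fun t ht => hbound t ht
  · simpa [neg_div] using (tendsto_exp_neg_atTop_nhds_zero.comp
      (tendsto_id.atTop_div_const hlam)).mul_const ‖ξhat 0 - q 0 + lam • v‖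

/-- In Euclidean space ℝⁿ, for the reduced observer
`ξ̂' t = -(ξ̂ t - q t)/λ` along the geodesic `q t = q₀ + t • v`, the distance
`‖ξ̂ t - q t‖` converges to `λ‖v‖` as `t → ∞`; more precisely for all `t ≥ 0`,
`| ‖ξ̂ t - q t‖ - λ‖v‖ | ≤ exp (-t/λ) * ‖ξ̂ 0 - q 0 + λ • v‖`. -/
theorem reduced_observer_euclidean_distance_convergence
    (n : ℕ) (hn : 1 ≤ n) (q₀ v : EuclideanSpace ℝ (Fin n)) (lam : ℝ) (hlam : 0 < lam)
    (q : ℝ → EuclideanSpace ℝ (Fin n))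
    (hq : ∀ t, q t = q₀ + t • v)
    (ξhat : ℝ → EuclideanSpace ℝ (Fin n))
    (hdiff : Differentiable ℝ ξhat)
    (hobs : ∀ t, 0 ≤ t → deriv ξhat t = -(lam⁻¹) • (ξhat t - q t)) :
    (∀ t, 0 ≤ t →
        |‖ξhat t - q t‖ - lam * ‖v‖| ≤ Real.exp (-t / lam) * ‖ξhat 0 - q 0 + lam • v‖) ∧
    Filter.Tendsto (fun t => ‖ξhat t - q t‖) Filter.atTop (nhds (lam * ‖v‖)) :=
  reduced_observer_euclidean_distance_convergence_general n q₀ v lam hlam q hq ξhat hdiff hobs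
end

section
/- Let A > 0 and let K : ℝ → ℝ be continuous with K(σ) ≤ A for all σ. Let z : ℝ → ℝ be twice continuously differentiable with z''(σ) = −K(σ)·z(σ), z(0) = 0, z'(0) = 1. Then for all σ with 0 ≤ σ ≤ π/(4√A) one has z'(σ)² − A·z(σ)² ≥ 0. -/
/-!
Write `a = √A`. The Wronskians `V = W(cos (a·), z)` and `U = W(sin (a·), z)` of `z` with the
solutions of the comparison equation `u'' = -a² u` have derivatives `(a² - K) z cos (a·)` and
`(a² - K) z sin (a·)`, so they increase as long as `z ≥ 0`, from `V 0 = 1` and `U 0 = 0`.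
A continuous induction keeps `z ≥ 0` while `a t ≤ π / 2`: at a zero of `z`, `V ≥ 1` forces
`z' > 0`. Inverting the rotation, `z' - a z = V (cos - sin) + U (cos + sin) ≥ 0` as long as
`a t ≤ π / 4`, and `z' ≥ a z ≥ 0` gives `z'² ≥ a² z²`.
-/

open Real Set Filter Topology

noncomputable def wronskian (f g : ℝ → ℝ) (t : ℝ) : ℝ := f t * deriv g t - deriv f t * g t

theorem ContDiff.differentiable_deriv_of_two {f : ℝ → ℝ} (hf : ContDiff ℝ 2 f) :
    Differentiable ℝ (deriv f) := by
  simpa using hf.differentiable_iteratedDeriv 1 (by norm_num)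

theorem hasDerivAt_wronskian {f g : ℝ → ℝ} {f₂ g₂ t : ℝ} (hf : DifferentiableAt ℝ f t)
    (hg : DifferentiableAt ℝ g t) (hf' : HasDerivAt (deriv f) f₂ t)
    (hg' : HasDerivAt (deriv g) g₂ t) :
    HasDerivAt (wronskian f g) (f t * g₂ - f₂ * g t) t :=
  ((hf.hasDerivAt.mul hg').sub (hf'.mul hg.hasDerivAt)).congr_deriv (by ring)

theorem monotoneOn_wronskian {f g q₁ q₂ : ℝ → ℝ} {D : Set ℝ} (hD : Convex ℝ D)
    (hf : ContDiff ℝ 2 f) (hg : ContDiff ℝ 2 g)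
    (hf'' : ∀ t ∈ D, deriv (deriv f) t = -q₁ t * f t)
    (hg'' : ∀ t ∈ D, deriv (deriv g) t = -q₂ t * g t)
    (hq : ∀ t ∈ D, q₂ t ≤ q₁ t) (hfg : ∀ t ∈ D, 0 ≤ f t * g t) :
    MonotoneOn (wronskian f g) D := by
  have hW : ∀ t, HasDerivAt (wronskian f g)
      (f t * deriv (deriv g) t - deriv (deriv f) t * g t) t := fun t =>
    hasDerivAt_wronskian (hf.differentiable two_ne_zero t) (hg.differentiable two_ne_zero t)
      (hf.differentiable_deriv_of_two t).hasDerivAt (hg.differentiable_deriv_of_two t).hasDerivAt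
  have hWd : Differentiable ℝ (wronskian f g) := fun t => (hW t).differentiableAt
  refine monotoneOn_of_deriv_nonneg hD hWd.continuous.continuousOn hWd.differentiableOn
    fun t ht => ?_
  have ht : t ∈ D := interior_subset ht
  rw [(hW t).deriv, hf'' t ht, hg'' t ht]
  calc 0 ≤ (q₁ t - q₂ t) * (f t * g t) := mul_nonneg (sub_nonneg.2 (hq t ht)) (hfg t ht)
    _ = _ := by ring

theorem hasDerivAt_cos_mul (a t : ℝ) :
    HasDerivAt (fun t => cos (a * t)) (-a * sin (a * t)) t := by
  simpa [mul_comm] using ((hasDerivAt_id t).const_mul a).cos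

theorem hasDerivAt_sin_mul (a t : ℝ) :
    HasDerivAt (fun t => sin (a * t)) (a * cos (a * t)) t := by
  simpa [mul_comm] using ((hasDerivAt_id t).const_mul a).sin

theorem deriv_cos_mul (a : ℝ) : deriv (fun t => cos (a * t)) = fun t => -a * sin (a * t) :=
  funext fun t => (hasDerivAt_cos_mul a t).deriv

theorem deriv_sin_mul (a : ℝ) : deriv (fun t => sin (a * t)) = fun t => a * cos (a * t) :=
  funext fun t => (hasDerivAt_sin_mul a t).deriv

theorem deriv_deriv_cos_mul (a t : ℝ) :
    deriv (deriv fun t => cos (a * t)) t = -a ^ 2 * cos (a * t) := by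
  rw [deriv_cos_mul, ((hasDerivAt_sin_mul a t).const_mul (-a)).deriv]; ring

theorem deriv_deriv_sin_mul (a t : ℝ) :
    deriv (deriv fun t => sin (a * t)) t = -a ^ 2 * sin (a * t) := by
  rw [deriv_sin_mul, ((hasDerivAt_cos_mul a t).const_mul a).deriv]; ring

theorem wronskian_cos_mul (a : ℝ) (g : ℝ → ℝ) (t : ℝ) :
    wronskian (fun t => cos (a * t)) g t = cos (a * t) * deriv g t + a * sin (a * t) * g t := by
  rw [wronskian, deriv_cos_mul]; ring

theorem wronskian_sin_mul (a : ℝ) (g : ℝ → ℝ) (t : ℝ) :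
    wronskian (fun t => sin (a * t)) g t = sin (a * t) * deriv g t - a * cos (a * t) * g t := by
  rw [wronskian, deriv_sin_mul]

theorem sin_le_cos_of_nonneg_of_le_pi_div_four {x : ℝ} (h₀ : 0 ≤ x) (h₁ : x ≤ π / 4) :
    sin x ≤ cos x := by
  rw [← cos_pi_div_two_sub]
  exact cos_le_cos_of_nonneg_of_le_pi h₀ (by linarith [pi_pos]) (by linarith)

theorem eventually_nhdsGT_pos_of_deriv_pos {f : ℝ → ℝ} {t : ℝ} (hf : f t = 0)
    (hf' : 0 < deriv f t) : ∀ᶠ τ in 𝓝[>] t, 0 < f τ := by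
  filter_upwards [nhdsWithin_le_nhds (eventually_nhdsWithin_sign_eq_of_deriv_pos hf' hf),
    self_mem_nhdsWithin] with τ hsign hτ
  rwa [sign_pos (sub_pos.2 hτ), sign_eq_one_iff] at hsign

structure IsNormalizedJacobiSolution (K z : ℝ → ℝ) : Prop where
  contDiff : ContDiff ℝ 2 z
  deriv_deriv : ∀ t, deriv (deriv z) t = -K t * z t
  apply_zero : z 0 = 0
  deriv_zero : deriv z 0 = 1

namespace IsNormalizedJacobiSolution

variable {K z : ℝ → ℝ} {a : ℝ}

theorem one_le_wronskian_cos (hz : IsNormalizedJacobiSolution K z) (ha : 0 ≤ a)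
    (hKa : ∀ t, K t ≤ a ^ 2) {t : ℝ} (ht : 0 ≤ t) (hat : a * t ≤ π / 2)
    (hnonneg : ∀ τ ∈ Icc 0 t, 0 ≤ z τ) : 1 ≤ wronskian (fun t => cos (a * t)) z t := by
  have hcos : ∀ τ ∈ Icc 0 t, 0 ≤ cos (a * τ) := fun τ hτ =>
    cos_nonneg_of_neg_pi_div_two_le_of_le (by linarith [pi_pos, mul_nonneg ha hτ.1])
      ((mul_le_mul_of_nonneg_left hτ.2 ha).trans hat)
  have hmono := monotoneOn_wronskian (q₁ := fun _ => a ^ 2) (convex_Icc 0 t) (by fun_prop)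
    hz.contDiff (fun τ _ => deriv_deriv_cos_mul a τ) (fun τ _ => hz.deriv_deriv τ)
    (fun τ _ => hKa τ) fun τ hτ => mul_nonneg (hcos τ hτ) (hnonneg τ hτ)
  calc 1 = wronskian (fun t => cos (a * t)) z 0 := by
        simp [wronskian_cos_mul, hz.apply_zero, hz.deriv_zero]
    _ ≤ _ := hmono (left_mem_Icc.2 ht) (right_mem_Icc.2 ht) ht

theorem wronskian_sin_nonneg (hz : IsNormalizedJacobiSolution K z) (ha : 0 ≤ a)
    (hKa : ∀ t, K t ≤ a ^ 2) {t : ℝ} (ht : 0 ≤ t) (hat : a * t ≤ π)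
    (hnonneg : ∀ τ ∈ Icc 0 t, 0 ≤ z τ) : 0 ≤ wronskian (fun t => sin (a * t)) z t := by
  have hsin : ∀ τ ∈ Icc 0 t, 0 ≤ sin (a * τ) := fun τ hτ =>
    sin_nonneg_of_nonneg_of_le_pi (mul_nonneg ha hτ.1)
      ((mul_le_mul_of_nonneg_left hτ.2 ha).trans hat)
  have hmono := monotoneOn_wronskian (q₁ := fun _ => a ^ 2) (convex_Icc 0 t) (by fun_prop)
    hz.contDiff (fun τ _ => deriv_deriv_sin_mul a τ) (fun τ _ => hz.deriv_deriv τ)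
    (fun τ _ => hKa τ) fun τ hτ => mul_nonneg (hsin τ hτ) (hnonneg τ hτ)
  calc 0 = wronskian (fun t => sin (a * t)) z 0 := by
        simp [wronskian_sin_mul, hz.apply_zero]
    _ ≤ _ := hmono (left_mem_Icc.2 ht) (right_mem_Icc.2 ht) ht

theorem nonneg_of_mul_le_pi_div_two (hz : IsNormalizedJacobiSolution K z) (ha : 0 ≤ a)
    (hKa : ∀ t, K t ≤ a ^ 2) {T : ℝ} (hT : a * T ≤ π / 2) : ∀ t ∈ Icc 0 T, 0 ≤ z t := by
  have hclosed : IsClosed ({t | 0 ≤ z t} ∩ Icc 0 T) :=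
    (isClosed_le continuous_const hz.contDiff.continuous).inter isClosed_Icc
  refine hclosed.Icc_subset_of_forall_mem_nhdsGT_of_Icc_subset hz.apply_zero.ge
    fun t ht hprefix => ?_
  have hat : a * t ≤ π / 2 := (mul_le_mul_of_nonneg_left ht.2.le ha).trans hT
  obtain hzt | hzt := (show 0 ≤ z t from hprefix (right_mem_Icc.2 ht.1)).eq_or_lt
  · have hV := hz.one_le_wronskian_cos ha hKa ht.1 hat hprefix
    rw [wronskian_cos_mul, ← hzt, mul_zero, add_zero] at hV
    have hz't : 0 < deriv z t :=
      pos_of_mul_pos_right (one_pos.trans_le hV) (cos_nonneg_of_neg_pi_div_two_le_of_le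
        (by linarith [pi_pos, mul_nonneg ha ht.1]) hat)
    exact (eventually_nhdsGT_pos_of_deriv_pos hzt.symm hz't).mono fun _ => le_of_lt
  · exact ((continuousAt_const.eventually_lt hz.contDiff.continuous.continuousAt hzt).filter_mono
      nhdsWithin_le_nhds).mono fun _ => le_of_lt

theorem mul_le_deriv (hz : IsNormalizedJacobiSolution K z) (ha : 0 ≤ a)
    (hKa : ∀ t, K t ≤ a ^ 2) {t : ℝ} (ht : 0 ≤ t) (hat : a * t ≤ π / 4) :
    a * z t ≤ deriv z t := by
  have hnonneg := hz.nonneg_of_mul_le_pi_div_two ha hKa (T := t) (by linarith [pi_pos])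
  have hV := hz.one_le_wronskian_cos ha hKa ht (by linarith [pi_pos]) hnonneg
  have hU := hz.wronskian_sin_nonneg ha hKa ht (by linarith [pi_pos]) hnonneg
  rw [wronskian_cos_mul] at hV
  rw [wronskian_sin_mul] at hU
  have hsc := sin_le_cos_of_nonneg_of_le_pi_div_four (mul_nonneg ha ht) hat
  have hs := sin_nonneg_of_nonneg_of_le_pi (mul_nonneg ha ht) (by linarith [pi_pos])
  have hrot : deriv z t - a * z t =
      (cos (a * t) * deriv z t + a * sin (a * t) * z t) * (cos (a * t) - sin (a * t)) +
      (sin (a * t) * deriv z t - a * cos (a * t) * z t) * (cos (a * t) + sin (a * t)) := by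
    linear_combination (a * z t - deriv z t) * sin_sq_add_cos_sq (a * t)
  rw [← sub_nonneg, hrot]
  exact add_nonneg (mul_nonneg (zero_le_one.trans hV) (sub_nonneg.2 hsc))
    (mul_nonneg hU (add_nonneg (hs.trans hsc) hs))

theorem sq_mul_sq_le_sq_deriv (hz : IsNormalizedJacobiSolution K z) (ha : 0 ≤ a)
    (hKa : ∀ t, K t ≤ a ^ 2) {t : ℝ} (ht : 0 ≤ t) (hat : a * t ≤ π / 4) :
    a ^ 2 * z t ^ 2 ≤ deriv z t ^ 2 := by
  have hz_nonneg := hz.nonneg_of_mul_le_pi_div_two ha hKa (T := t) (by linarith [pi_pos]) t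
    (right_mem_Icc.2 ht)
  rw [← mul_pow]
  exact pow_le_pow_left₀ (mul_nonneg ha hz_nonneg) (hz.mul_le_deriv ha hKa ht hat) 2

end IsNormalizedJacobiSolution

theorem jacobi_solution_contraction_estimate_general
    (A : ℝ) (hA : 0 < A)
    (K : ℝ → ℝ) (hKA : ∀ σ, K σ ≤ A)
    (z : ℝ → ℝ) (hz : ContDiff ℝ 2 z)
    (hzeq : ∀ σ, deriv (deriv z) σ = -K σ * z σ)
    (hz0 : z 0 = 0) (hz'0 : deriv z 0 = 1) :
    ∀ σ, 0 ≤ σ → σ ≤ Real.pi / (4 * Real.sqrt A) →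
      0 ≤ (deriv z σ) ^ 2 - A * (z σ) ^ 2 := by
  intro σ hσ0 hσ
  have hsqrt : 0 < √A := sqrt_pos.2 hA
  have hsq : √A ^ 2 = A := sq_sqrt hA.le
  have hσA : √A * σ ≤ π / 4 := by
    rw [le_div_iff₀ (by positivity)] at hσ
    linarith
  have hjacobi : IsNormalizedJacobiSolution K z := ⟨hz, hzeq, hz0, hz'0⟩
  have := hjacobi.sq_mul_sq_le_sq_deriv hsqrt.le (fun t => hsq.symm ▸ hKA t) hσ0 hσA
  rw [hsq] at this
  linarith

/-- let `K` be continuous with `K ≤ A` (`A > 0`) and let `z` solve the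
scalar Jacobi equation `z'' = -K z`, `z 0 = 0`, `z' 0 = 1`. Then for all
`0 ≤ σ ≤ π/(4√A)` one has `z'(σ)² - A z(σ)² ≥ 0`. -/
theorem jacobi_solution_contraction_estimate
    (A : ℝ) (hA : 0 < A)
    (K : ℝ → ℝ) (hKcont : Continuous K) (hKA : ∀ σ, K σ ≤ A)
    (z : ℝ → ℝ) (hz : ContDiff ℝ 2 z)
    (hzeq : ∀ σ, deriv (deriv z) σ = -K σ * z σ)
    (hz0 : z 0 = 0) (hz'0 : deriv z 0 = 1) :
    ∀ σ, 0 ≤ σ → σ ≤ Real.pi / (4 * Real.sqrt A) →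
      0 ≤ (deriv z σ) ^ 2 - A * (z σ) ^ 2 :=
  jacobi_solution_contraction_estimate_general A hA K hKA z hz hzeq hz0 hz'0
end
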